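/- arXiv:1909.06759 — 5 statements merged into one kernel-verified Lean document; each statement's English description precedes it below -/
import Mathlib

section
/- Let α, γ, ζ > 0, d < x, r_s < r_d, and n = 1. Define b(ζ) = (d+x)/2 − (1/2)√((d−x)² + (2γ/(αζ))(r_s − r_d)) for ζ large enough that the discriminant is nonnegative. Then lim_{ζ→∞} b(ζ) = d and lim_{ζ→∞} [ (1/(2ζ))·(r_s − r_d)/(b(ζ) − d) + b(ζ) ] = d − α(x − d)/γ. -/
open Filter Topology

theorem stmt_2 (α γ d x rs rd : ℝ) (hα : 0 < α) (hγ : 0 < γ)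
    (hdx : d < x) (hr : rs < rd) :
    Tendsto (fun ζ : ℝ =>
        (d+x)/2 - (1/2)*Real.sqrt ((d - x)^2 + (2*γ/(α*ζ))*(rs - rd)))
      atTop (𝓝 d) ∧
    Tendsto (fun ζ : ℝ =>
        (1/(2*ζ))*(rs - rd) /
          ((d+x)/2 - (1/2)*Real.sqrt ((d - x)^2 + (2*γ/(α*ζ))*(rs - rd)) - d)
        + ((d+x)/2 - (1/2)*Real.sqrt ((d - x)^2 + (2*γ/(α*ζ))*(rs - rd))))
      atTop (𝓝 (d - α*(x - d)/γ)) := by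
  set s : ℝ → ℝ := fun ζ => Real.sqrt ((d - x)^2 + (2*γ/(α*ζ))*(rs - rd)) with hsdef
  have h0 : Tendsto (fun ζ : ℝ => (2*γ/(α*ζ))*(rs - rd)) atTop (𝓝 0) := by
    have heq : (fun ζ : ℝ => (2*γ/(α*ζ))*(rs - rd))
        = fun ζ : ℝ => (2*γ*(rs - rd)/α) * ζ⁻¹ := by
      funext ζ; field_simp
    rw [heq]
    simpa using tendsto_inv_atTop_zero.const_mul (2*γ*(rs - rd)/α)
  have hinner : Tendsto (fun ζ : ℝ => (d - x)^2 + (2*γ/(α*ζ))*(rs - rd)) atTop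
      (𝓝 ((d - x)^2)) := by
    simpa using tendsto_const_nhds.add h0
  have hs : Tendsto s atTop (𝓝 (x - d)) := by
    have := hinner.sqrt
    rwa [Real.sqrt_sq_eq_abs, abs_of_neg (by linarith), neg_sub] at this
  have hb : Tendsto (fun ζ : ℝ => (d+x)/2 - (1/2) * s ζ) atTop (𝓝 d) := by
    have h1 : Tendsto (fun ζ : ℝ => (d+x)/2 - (1/2) * s ζ) atTop (𝓝 ((d+x)/2 - (1/2)*(x - d))) :=
      tendsto_const_nhds.sub (hs.const_mul (1/2 : ℝ))
    have hd : (d+x)/2 - (1/2)*(x - d) = d := by ring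
    rwa [hd] at h1
  refine ⟨hb, ?_⟩
  have hg : Tendsto (fun ζ : ℝ => -(α/(2*γ))*((x - d) + s ζ) + ((d+x)/2 - (1/2) * s ζ))
      atTop (𝓝 (d - α*(x - d)/γ)) := by
    have h1 : Tendsto (fun ζ : ℝ => -(α/(2*γ))*((x - d) + s ζ) + ((d+x)/2 - (1/2) * s ζ))
        atTop (𝓝 (-(α/(2*γ))*((x - d) + (x - d)) + d)) :=
      ((tendsto_const_nhds.add hs).const_mul (-(α/(2*γ)))).add hb
    have hd : -(α/(2*γ))*((x - d) + (x - d)) + d = d - α*(x - d)/γ := by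
      field_simp; ring
    rwa [hd] at h1
  refine hg.congr' ?_
  have hζ0 : (0:ℝ) < max 1 (4*γ*(rd - rs)/(α*(x - d)^2)) := lt_max_of_lt_left one_pos
  filter_upwards [eventually_ge_atTop (max 1 (4*γ*(rd - rs)/(α*(x - d)^2)))] with ζ hζ
  have hζpos : (0:ℝ) < ζ := lt_of_lt_of_le hζ0 hζ
  have hxd : (0:ℝ) < x - d := by linarith
  have hx2 : (0:ℝ) < (x - d)^2 := by positivity
  -- bound the perturbation term
  have hc : (2*γ/(α*ζ))*(rd - rs) ≤ (x - d)^2/2 := by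
    have h1 : 4*γ*(rd - rs)/(α*(x - d)^2) ≤ ζ := le_trans (le_max_right _ _) hζ
    rw [div_mul_eq_mul_div, div_le_div_iff₀ (by positivity) (by norm_num)]
    have := mul_le_mul_of_nonneg_left h1 (le_of_lt (mul_pos hα hx2))
    calc 2*γ*(rd - rs)*2 = (α*(x - d)^2) * (4*γ*(rd - rs)/(α*(x - d)^2)) := by
          field_simp; ring
      _ ≤ (α*(x - d)^2) * ζ := mul_le_mul_of_nonneg_left h1 (le_of_lt (mul_pos hα hx2))
      _ = (x - d)^2 * (α*ζ) := by ring
  have hαζ : (0:ℝ) < α*ζ := mul_pos hα hζpos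
  have hin : (0:ℝ) < (d - x)^2 + (2*γ/(α*ζ))*(rs - rd) := by
    have : (2*γ/(α*ζ))*(rd - rs) ≤ (x - d)^2/2 := hc
    have h2 : (2*γ/(α*ζ))*(rs - rd) = -((2*γ/(α*ζ))*(rd - rs)) := by ring
    have h3 : (d - x)^2 = (x - d)^2 := by ring
    rw [h2, h3]; linarith
  have hlt : (d - x)^2 + (2*γ/(α*ζ))*(rs - rd) < (x - d)^2 := by
    have hterm : (2*γ/(α*ζ))*(rs - rd) < 0 := by
      apply mul_neg_of_pos_of_neg
      · positivity
      · linarith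
    nlinarith
  have hsnn : 0 ≤ s ζ := Real.sqrt_nonneg _
  have hslt : s ζ < x - d := by
    have := Real.sqrt_lt_sqrt (le_of_lt hin) hlt
    rwa [Real.sqrt_sq_eq_abs, abs_of_pos hxd] at this
  have hsq : (s ζ)^2 = (d - x)^2 + (2*γ/(α*ζ))*(rs - rd) := Real.sq_sqrt (le_of_lt hin)
  have hden : (d+x)/2 - (1/2) * s ζ - d ≠ 0 := by
    have : 0 < (x - d)/2 - (s ζ)/2 := by linarith
    intro h; apply ne_of_gt this; linarith [h]
  have hne : x - d - s ζ ≠ 0 := by intro h; linarith [hslt]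
  show -(α/(2*γ))*((x - d) + s ζ) + ((d+x)/2 - (1/2) * s ζ)
      = (1/(2*ζ))*(rs - rd) / ((d+x)/2 - (1/2)* s ζ - d) + ((d+x)/2 - (1/2)* s ζ)
  generalize hgen : s ζ = t at hsnn hslt hsq hden hne ⊢
  have hζne : ζ ≠ 0 := ne_of_gt hζpos
  have hαne : α ≠ 0 := ne_of_gt hα
  have hγne : γ ≠ 0 := ne_of_gt hγ
  have hsq' : t^2 * (α*ζ) = (d - x)^2 * (α*ζ) + 2*γ*(rs - rd) := by
    field_simp at hsq; linarith [hsq]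
  have congruent : (1/(2*ζ))*(rs - rd) / ((d+x)/2 - (1/2)*t - d) = -(α/(2*γ))*((x - d) + t) := by
    rw [div_eq_iff hden]
    field_simp
    ring_nf
    nlinarith [hsq']
  rw [congruent]
end

section
/- Let ω₄, ω₀ > 0 and ω₁, ω₃ ∈ ℝ, and consider the quartic ω₄z⁴ + ω₃z³ + ω₁z + ω₀ = 0 over ℂ. Then it is impossible that all four roots have strictly negative real part. Equivalently, at least one root has nonnegative real part. -/
open Polynomial in
lemma my_root_quartic (c₃ c₂ c₁ c₀ : ℂ) :
    ∃ a : ℂ, a^4 + c₃*a^3 + c₂*a^2 + c₁*a + c₀ = 0 := by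
  have hdeg : (X^4 + C c₃*X^3 + C c₂*X^2 + C c₁*X + C c₀ : ℂ[X]).degree = 4 := by
    compute_degree!
  obtain ⟨a, ha⟩ := Complex.exists_root (f := X^4 + C c₃*X^3 + C c₂*X^2 + C c₁*X + C c₀)
    (by rw [hdeg]; norm_num)
  refine ⟨a, ?_⟩
  simpa [Polynomial.IsRoot] using ha

open Polynomial in
lemma my_root_cubic (c₂ c₁ c₀ : ℂ) :
    ∃ a : ℂ, a^3 + c₂*a^2 + c₁*a + c₀ = 0 := by
  have hdeg : (X^3 + C c₂*X^2 + C c₁*X + C c₀ : ℂ[X]).degree = 3 := by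
    compute_degree!
  obtain ⟨a, ha⟩ := Complex.exists_root (f := X^3 + C c₂*X^2 + C c₁*X + C c₀)
    (by rw [hdeg]; norm_num)
  refine ⟨a, ?_⟩
  simpa [Polynomial.IsRoot] using ha

open Polynomial in
lemma my_root_quadratic (c₁ c₀ : ℂ) :
    ∃ a : ℂ, a^2 + c₁*a + c₀ = 0 := by
  have hdeg : (X^2 + C c₁*X + C c₀ : ℂ[X]).degree = 2 := by
    compute_degree!
  obtain ⟨a, ha⟩ := Complex.exists_root (f := X^2 + C c₁*X + C c₀)
    (by rw [hdeg]; norm_num)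
  refine ⟨a, ?_⟩
  simpa [Polynomial.IsRoot] using ha

lemma my_split2 (c₁ c₀ : ℂ) :
    ∃ a b : ℂ, ∀ z : ℂ, z^2 + c₁*z + c₀ = (z-a)*(z-b) := by
  obtain ⟨a, ha⟩ := my_root_quadratic c₁ c₀
  refine ⟨a, -(c₁+a), fun z => ?_⟩
  linear_combination ha

lemma my_split3 (c₂ c₁ c₀ : ℂ) :
    ∃ a b c : ℂ, ∀ z : ℂ, z^3 + c₂*z^2 + c₁*z + c₀ = (z-a)*(z-b)*(z-c) := by
  obtain ⟨a, ha⟩ := my_root_cubic c₂ c₁ c₀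
  obtain ⟨b, c, hbc⟩ := my_split2 (c₂+a) (c₁+a*(c₂+a))
  refine ⟨a, b, c, fun z => ?_⟩
  have h := hbc z
  calc z^3 + c₂*z^2 + c₁*z + c₀
      = (z-a)*(z^2 + (c₂+a)*z + (c₁+a*(c₂+a))) := by linear_combination ha
    _ = (z-a)*(z-b)*(z-c) := by rw [h]; ring

lemma my_split4 (c₃ c₂ c₁ c₀ : ℂ) :
    ∃ a b c d : ℂ, ∀ z : ℂ,
      z^4 + c₃*z^3 + c₂*z^2 + c₁*z + c₀ = (z-a)*(z-b)*(z-c)*(z-d) := by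
  obtain ⟨a, ha⟩ := my_root_quartic c₃ c₂ c₁ c₀
  obtain ⟨b, c, d, hbcd⟩ := my_split3 (c₃+a) (c₂+a*(c₃+a)) (c₁+a*(c₂+a*(c₃+a)))
  refine ⟨a, b, c, d, fun z => ?_⟩
  have h := hbcd z
  calc z^4 + c₃*z^3 + c₂*z^2 + c₁*z + c₀
      = (z-a)*(z^3 + (c₃+a)*z^2 + (c₂+a*(c₃+a))*z + (c₁+a*(c₂+a*(c₃+a)))) := by
        linear_combination ha
    _ = (z-a)*(z-b)*(z-c)*(z-d) := by rw [h]; ring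

theorem stmt_13 (ω₀ ω₁ ω₃ ω₄ : ℝ) (h₀ : 0 < ω₀) (h₄ : 0 < ω₄) :
    (¬ ∀ z : ℂ, (ω₄:ℂ)*z^4 + (ω₃:ℂ)*z^3 + (ω₁:ℂ)*z + (ω₀:ℂ) = 0 → z.re < 0) ∧
    ∃ z : ℂ, (ω₄:ℂ)*z^4 + (ω₃:ℂ)*z^3 + (ω₁:ℂ)*z + (ω₀:ℂ) = 0 ∧ 0 ≤ z.re := by
  have hω4 : (ω₄:ℂ) ≠ 0 := by exact_mod_cast h₄.ne'
  obtain ⟨a, b, c, d, H⟩ :=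
    my_split4 ((ω₃:ℂ)/(ω₄:ℂ)) 0 ((ω₁:ℂ)/(ω₄:ℂ)) ((ω₀:ℂ)/(ω₄:ℂ))
  have key : ∀ z : ℂ, (ω₄:ℂ)*z^4 + (ω₃:ℂ)*z^3 + (ω₁:ℂ)*z + (ω₀:ℂ)
      = (ω₄:ℂ) * ((z-a)*(z-b)*(z-c)*(z-d)) := by
    intro z
    have h := H z
    field_simp at h
    linear_combination h
  have roots : ∀ z : ℂ, z = a ∨ z = b ∨ z = c ∨ z = d →
      (ω₄:ℂ)*z^4 + (ω₃:ℂ)*z^3 + (ω₁:ℂ)*z + (ω₀:ℂ) = 0 := by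
    intro z hz
    rw [key z]
    rcases hz with h | h | h | h <;> subst h <;> ring
  suffices hex : ∃ z : ℂ, (ω₄:ℂ)*z^4 + (ω₃:ℂ)*z^3 + (ω₁:ℂ)*z + (ω₀:ℂ) = 0 ∧ 0 ≤ z.re by
    refine ⟨?_, hex⟩
    obtain ⟨z, hz, hre⟩ := hex
    intro hall
    exact absurd (hall z hz) (not_lt.2 hre)
  by_contra hno
  push_neg at hno
  have ha' : a.re < 0 := hno a (roots a (Or.inl rfl))
  have hb' : b.re < 0 := hno b (roots b (Or.inr (Or.inl rfl)))
  have hc' : c.re < 0 := hno c (roots c (Or.inr (Or.inr (Or.inl rfl))))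
  have hd' : d.re < 0 := hno d (roots d (Or.inr (Or.inr (Or.inr rfl))))
  have h0 := H 0
  have h1 := H 1
  have hm1 := H (-1)
  have h2 := H 2
  have hE2 : a*b + a*c + a*d + b*c + b*d + c*d = 0 := by
    linear_combination -(h1 + hm1 - 2*h0)/2
  have hE1 : a + b + c + d = -((ω₃:ℂ)/(ω₄:ℂ)) := by
    linear_combination (h2 - 3*h1 - hm1 + 3*h0)/6
  have hcast : ((ω₃:ℂ)/(ω₄:ℂ)) = ((ω₃/ω₄ : ℝ) : ℂ) := by push_cast; ring
  have him : a.im + b.im + c.im + d.im = 0 := by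
    have h := congrArg Complex.im hE1
    rw [hcast] at h
    simpa using h
  have hre2 : a.re*b.re - a.im*b.im + (a.re*c.re - a.im*c.im) +
      (a.re*d.re - a.im*d.im) + (b.re*c.re - b.im*c.im) +
      (b.re*d.re - b.im*d.im) + (c.re*d.re - c.im*d.im) = 0 := by
    have h := congrArg Complex.re hE2
    simpa [Complex.mul_re] using h
  nlinarith [mul_pos_of_neg_of_neg ha' hb', mul_pos_of_neg_of_neg ha' hc',
    mul_pos_of_neg_of_neg ha' hd', mul_pos_of_neg_of_neg hb' hc',
    mul_pos_of_neg_of_neg hb' hd', mul_pos_of_neg_of_neg hc' hd',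
    sq_nonneg a.im, sq_nonneg b.im, sq_nonneg c.im, sq_nonneg d.im,
    sq_nonneg (a.im + b.im + c.im + d.im), him, hre2]
end

section
/- Let ω₄, ω₀ > 0 and ω₁, ω₃ > 0 (both positive), and define f(z) = ω₄z⁴ + ω₃z³ + ω₁z + ω₀. Suppose f(−1) = ω₄ − ω₃ − ω₁ + ω₀ > 0 and f'(−1) = −4ω₄ + 3ω₃ + ω₁ > 0. If ξ is any real root of f, then |ξ| > 1. -/
theorem stmt_15 (ω₀ ω₁ ω₃ ω₄ : ℝ) (h₀ : 0 < ω₀) (h₄ : 0 < ω₄)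
    (h₁ : 0 < ω₁) (h₃ : 0 < ω₃)
    (hf : ω₄ - ω₃ - ω₁ + ω₀ > 0) (hf' : -4*ω₄ + 3*ω₃ + ω₁ > 0) :
    ∀ ξ : ℝ, ω₄*ξ^4 + ω₃*ξ^3 + ω₁*ξ + ω₀ = 0 → |ξ| > 1 := by
  intro ξ hroot
  by_contra h
  push_neg at h
  rw [abs_le] at h
  obtain ⟨hl, hr⟩ := h
  rcases le_or_gt 0 ξ with hpos | hneg
  · nlinarith [pow_nonneg hpos 4, pow_nonneg hpos 3, mul_nonneg h₄.le (pow_nonneg hpos 4),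
      mul_nonneg h₃.le (pow_nonneg hpos 3), mul_nonneg h₁.le hpos]
  · set t : ℝ := -ξ with ht
    have ht0 : 0 < t := by simp [ht]; linarith
    have ht1 : t ≤ 1 := by simp [ht]; linarith
    have hg : ω₄*t^4 - ω₃*t^3 - ω₁*t + ω₀ = 0 := by
      have : ξ = -t := by simp [ht]
      rw [this] at hroot; ring_nf at hroot ⊢; linarith
    have u1 : (0:ℝ) ≤ 1 - t := by linarith
    have hB : ω₃*(t^2+t+1) + ω₁ - ω₄*(t^3+t^2+t+1) ≥ 0 := by
      nlinarith [mul_nonneg hf'.le (by nlinarith [pow_nonneg ht0.le 3, sq_nonneg t] :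
          (0:ℝ) ≤ t^3+t^2+t+1),
        mul_nonneg h₃.le (mul_nonneg u1 (by nlinarith [sq_nonneg t] : (0:ℝ) ≤ 3*t^2+2*t+1)),
        mul_nonneg h₁.le (by nlinarith [mul_nonneg ht0.le ht0.le, mul_nonneg u1 (sq_nonneg t), mul_nonneg u1 ht0.le] :
          (0:ℝ) ≤ 3 - t - t^2 - t^3)]
    have key : (0:ℝ) ≤ (1-t) * (ω₃*(t^2+t+1) + ω₁ - ω₄*(t^3+t^2+t+1)) := mul_nonneg u1 hB
    nlinarith [key, hg, hf]
end

section
/- Let ω₄, ω₀ > 0 and ω₁, ω₃ < 0 (both negative), and define f(z) = ω₄z⁴ + ω₃z³ + ω₁z + ω₀. Suppose f(1) = ω₄ + ω₃ + ω₁ + ω₀ > 0 and f'(1) = 4ω₄ + 3ω₃ + ω₁ < 0. Then every real root ξ of f satisfies |ξ| > 1. -/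
theorem stmt_16 (ω₀ ω₁ ω₃ ω₄ : ℝ) (h₀ : 0 < ω₀) (h₄ : 0 < ω₄)
    (h₁ : ω₁ < 0) (h₃ : ω₃ < 0)
    (hf : ω₄ + ω₃ + ω₁ + ω₀ > 0) (hf' : 4*ω₄ + 3*ω₃ + ω₁ < 0) :
    ∀ ξ : ℝ, ω₄*ξ^4 + ω₃*ξ^3 + ω₁*ξ + ω₀ = 0 → |ξ| > 1 := by
  intro ξ hroot
  by_contra h
  push_neg at h
  rw [abs_le] at h
  obtain ⟨hl, hr⟩ := h
  rcases le_or_gt ξ 0 with hneg | hpos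
  · nlinarith [sq_nonneg ξ, sq_nonneg (ξ^2), mul_nonneg (mul_nonneg (neg_nonneg.2 (le_of_lt h₃)) (neg_nonneg.2 hneg)) (sq_nonneg ξ), mul_nonneg (neg_nonneg.2 (le_of_lt h₁)) (neg_nonneg.2 hneg)]
  · nlinarith [mul_pos hpos hpos, sq_nonneg (1-ξ), mul_nonneg (mul_nonneg (sub_nonneg.2 hr) hpos.le) hpos.le,
      mul_nonneg (sub_nonneg.2 hr) hpos.le,
      mul_nonneg (mul_nonneg (mul_nonneg (sub_nonneg.2 hr) hpos.le) hpos.le) hpos.le,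
      mul_nonneg (mul_nonneg (sub_nonneg.2 hr) (sub_nonneg.2 hr)) hpos.le,
      mul_nonneg (mul_nonneg (mul_nonneg (sub_nonneg.2 hr) (sub_nonneg.2 hr)) hpos.le) hpos.le,
      mul_nonneg (neg_nonneg.2 h₃.le) (mul_nonneg (mul_nonneg (sub_nonneg.2 hr) (sub_nonneg.2 hr)) hpos.le),
      mul_nonneg (neg_nonneg.2 h₃.le) (mul_nonneg (mul_nonneg (mul_nonneg (sub_nonneg.2 hr) (sub_nonneg.2 hr)) hpos.le) hpos.le),
      mul_nonneg h₄.le (mul_nonneg (mul_nonneg (sub_nonneg.2 hr) (sub_nonneg.2 hr)) hpos.le)]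
end

section
/- Let α, β, γ, ζ > 0, n ≥ 1, d, w, x ∈ [0,1], r_s ≠ r_d, and let SW(c₁,…,cₙ,s) = −α(s−x)² − β∑ᵢ(w−cᵢ)² − (γ+ζ)∑ᵢ(s−cᵢ)² + r_d·n + ((r_s − r_d)/(s−d))·(∑ᵢ cᵢ − dn). If (c₁,…,cₙ,s) with s > d is a stationary point of SW, then c₁ = ⋯ = cₙ = (2βw + 2(γ+ζ)s + (r_s−r_d)/(s−d)) / (2β + 2(γ+ζ)), and y = s − d satisfies ω₄y⁴ + ω₃y³ + ω₁y + ω₀ = 0, where ω₀ = n(r_d−r_s)², ω₁ = 2βn(r_d−r_s)(d−w), ω₃ = 4[βn(d−w)(γ+ζ) + α(d−x)(β+γ+ζ)], ω₄ = 4[βn(γ+ζ) + α(β+γ+ζ)]. -/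
/-!
Each condition `∂SW/∂cᵢ = 0` is one and the same affine equation in `cᵢ`, so all `cᵢ` equal its
root `C`. Substituting `C` into `∂SW/∂s = 0` and clearing the denominators `s - d` and `(s - d)²`
eliminates `C` and leaves the quartic in `y = s - d`.
-/

noncomputable def SW (α β γ ζ rd rs d w x : ℝ) (n : ℕ) (c : Fin n → ℝ) (s : ℝ) : ℝ :=
  -α*(s - x)^2 - β*∑ i, (w - c i)^2 - (γ+ζ)*∑ i, (s - c i)^2
    + rd*n + ((rs - rd)/(s - d))*((∑ i, c i) - d*n)

theorem hasDerivAt_sum_comp_update {𝕜 F ι : Type*} [NontriviallyNormedField 𝕜]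
    [NormedAddCommGroup F] [NormedSpace 𝕜 F] [Fintype ι] [DecidableEq ι]
    {f : 𝕜 → F} {f' : F} (c : ι → 𝕜) (i : ι) (hf : HasDerivAt f f' (c i)) :
    HasDerivAt (fun t => ∑ j, f (Function.update c i t j)) f' (c i) := by
  have hsum : (fun t => ∑ j, f (Function.update c i t j))
      = fun t => f t + ∑ j ∈ Finset.univ \ {i}, f (c j) := by
    funext t
    simp_rw [← Function.comp_apply (f := f), Function.comp_update]
    exact Finset.sum_update_of_mem (Finset.mem_univ i) _ _
  rw [hsum]
  exact hf.add_const _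

section PartialDerivatives

variable (α β γ ζ rd rs d w x : ℝ) (n : ℕ) (c : Fin n → ℝ) (s : ℝ)

theorem hasDerivAt_SW_update (i : Fin n) :
    HasDerivAt (fun t => SW α β γ ζ rd rs d w x n (Function.update c i t) s)
      (2*β*(w - c i) + 2*(γ+ζ)*(s - c i) + (rs - rd)/(s - d)) (c i) := by
  have hw := hasDerivAt_sum_comp_update c i (((hasDerivAt_id' (c i)).const_sub w).fun_pow 2)
  have hs := hasDerivAt_sum_comp_update c i (((hasDerivAt_id' (c i)).const_sub s).fun_pow 2)
  have hc := hasDerivAt_sum_comp_update c i (hasDerivAt_id' (c i))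
  have h := ((((hw.const_mul β).const_sub (-α*(s - x)^2)).fun_sub (hs.const_mul (γ+ζ))).add_const
    (rd*n)).fun_add (((hc.sub_const (d*n)).const_mul ((rs - rd)/(s - d))))
  exact h.congr_deriv (by ring)

theorem hasDerivAt_SW_right (hs : s ≠ d) :
    HasDerivAt (SW α β γ ζ rd rs d w x n c)
      (-2*α*(s - x) - (γ+ζ)*∑ j, 2*(s - c j)
        - (rs - rd)/(s - d)^2*((∑ j, c j) - d*n)) s := by
  have hx := ((hasDerivAt_id' s).sub_const x).fun_pow 2
  have hc : HasDerivAt (fun t => ∑ j, (t - c j)^2) (∑ j, 2*(s - c j)) s :=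
    HasDerivAt.fun_sum fun j _ => by simpa using ((hasDerivAt_id' s).sub_const (c j)).fun_pow 2
  have hq := ((hasDerivAt_id' s).sub_const d).fun_inv (sub_ne_zero.mpr hs)
  have h := ((((hx.const_mul (-α)).sub_const (β*∑ j, (w - c j)^2)).fun_sub
    (hc.const_mul (γ+ζ))).add_const (rd*n)).fun_add
    (((hq.const_mul (rs - rd)).mul_const ((∑ j, c j) - d*n)))
  have hSW : SW α β γ ζ rd rs d w x n c = fun t => -α*(t - x)^2 - β*∑ j, (w - c j)^2
      - (γ+ζ)*∑ j, (t - c j)^2 + rd*n + (rs - rd)*(t - d)⁻¹*((∑ j, c j) - d*n) := by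
    funext t
    simp only [SW, div_eq_mul_inv]
  rw [hSW]
  refine h.congr_deriv ?_
  field_simp
  ring

end PartialDerivatives

theorem quartic_of_first_order_conditions {α β γ ζ rd rs d w x C s : ℝ} (n : ℝ) (hs : s ≠ d)
    (hC : 2*β*(w - C) + 2*(γ+ζ)*(s - C) + (rs - rd)/(s - d) = 0)
    (hS : -2*α*(s - x) - (γ+ζ)*(n*(2*(s - C))) - (rs - rd)/(s - d)^2*(n*C - d*n) = 0) :
    (4*(β*n*(γ+ζ) + α*(β+γ+ζ)))*(s - d)^4
      + (4*(β*n*(d - w)*(γ+ζ) + α*(d - x)*(β+γ+ζ)))*(s - d)^3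
      + (2*β*n*(rd - rs)*(d - w))*(s - d)
      + n*(rd - rs)^2 = 0 := by
  have hy : s - d ≠ 0 := sub_ne_zero.mpr hs
  have hC' : 2*β*(w - C)*(s - d) + 2*(γ+ζ)*(s - C)*(s - d) + (rs - rd) = 0 := by
    field_simp at hC
    linear_combination hC
  have hS' : 2*α*(s - x)*(s - d)^2 + 2*(γ+ζ)*n*(s - C)*(s - d)^2 + (rs - rd)*n*(C - d) = 0 := by
    field_simp at hS
    linear_combination -hS
  linear_combination ((rs - rd)*n - 2*(γ+ζ)*n*(s - d)^2) * hC' + (2*(β+γ+ζ)*(s - d)) * hS'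

theorem stmt_17_general (α β γ ζ rd rs d w x : ℝ)
    (hβ : 0 < β) (hγ : 0 < γ) (hζ : 0 < ζ)
    (n : ℕ)
    (c : Fin n → ℝ) (s : ℝ) (hs : d < s)
    (hstatc : ∀ i, HasDerivAt
      (fun t => SW α β γ ζ rd rs d w x n (Function.update c i t) s) 0 (c i))
    (hstats : HasDerivAt (SW α β γ ζ rd rs d w x n c) 0 s) :
    (∀ i, c i = (2*β*w + 2*(γ+ζ)*s + (rs - rd)/(s - d)) / (2*β + 2*(γ+ζ))) ∧
    (4*(β*n*(γ+ζ) + α*(β+γ+ζ)))*(s - d)^4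
      + (4*(β*n*(d - w)*(γ+ζ) + α*(d - x)*(β+γ+ζ)))*(s - d)^3
      + (2*β*n*(rd - rs)*(d - w))*(s - d)
      + n*(rd - rs)^2 = 0 := by
  have hden : 2*β + 2*(γ+ζ) ≠ 0 := by positivity
  set C := (2*β*w + 2*(γ+ζ)*s + (rs - rd)/(s - d)) / (2*β + 2*(γ+ζ))
  have hfocC : 2*β*(w - C) + 2*(γ+ζ)*(s - C) + (rs - rd)/(s - d) = 0 := by
    simp only [C]
    field_simp
    ring
  have hc : ∀ i, c i = C := fun i => by
    have hfoc := (hasDerivAt_SW_update α β γ ζ rd rs d w x n c s i).unique (hstatc i)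
    exact mul_left_cancel₀ hden (by linear_combination hfocC - hfoc)
  have hfocS := (hasDerivAt_SW_right α β γ ζ rd rs d w x n c s hs.ne').unique hstats
  simp only [hc, Finset.sum_const, Finset.card_univ, Fintype.card_fin, nsmul_eq_mul] at hfocS
  exact ⟨hc, quartic_of_first_order_conditions n hs.ne' hfocC hfocS⟩

theorem stmt_17 (α β γ ζ rd rs d w x : ℝ)
    (hα : 0 < α) (hβ : 0 < β) (hγ : 0 < γ) (hζ : 0 < ζ)
    (n : ℕ) (hn : 1 ≤ n)
    (hd : d ∈ Set.Icc (0:ℝ) 1) (hw : w ∈ Set.Icc (0:ℝ) 1) (hx : x ∈ Set.Icc (0:ℝ) 1)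
    (hr : rs ≠ rd) (c : Fin n → ℝ) (s : ℝ) (hs : d < s)
    (hstatc : ∀ i, HasDerivAt
      (fun t => SW α β γ ζ rd rs d w x n (Function.update c i t) s) 0 (c i))
    (hstats : HasDerivAt (SW α β γ ζ rd rs d w x n c) 0 s) :
    (∀ i, c i = (2*β*w + 2*(γ+ζ)*s + (rs - rd)/(s - d)) / (2*β + 2*(γ+ζ))) ∧
    (4*(β*n*(γ+ζ) + α*(β+γ+ζ)))*(s - d)^4
      + (4*(β*n*(d - w)*(γ+ζ) + α*(d - x)*(β+γ+ζ)))*(s - d)^3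
      + (2*β*n*(rd - rs)*(d - w))*(s - d)
      + n*(rd - rs)^2 = 0 :=
  stmt_17_general α β γ ζ rd rs d w x hβ hγ hζ n c s hs hstatc hstats
end
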